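/- Let (a_n), (c_n), (d_n) be real sequences with c_n > 0, d_n > 0 for all n, and let θ ∈ ℝ and α > 0 and c ≥ 0 be constants. Assume: (i) a_n / c_n → θ; (ii) |c_n − d_n| ≤ c n^{−α} √(d_n (c_n + d_n)) for all large n. Then c_n / d_n → 1 and a_n / d_n → θ. -/
import Mathlib


open Filter

lemma key_quad (x ε : ℝ) (hx : 0 < x) (hε0 : 0 ≤ ε) (hε : ε ≤ 1/2)
    (h : |x - 1| ≤ ε * Real.sqrt (1 + x)) : |x - 1| ≤ 2 * ε := by
  rcases le_or_gt x 3 with h3 | h3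
  · calc |x - 1| ≤ ε * Real.sqrt (1 + x) := h
      _ ≤ ε * Real.sqrt 4 := by
          gcongr
          linarith
      _ = 2 * ε := by
          rw [show (4 : ℝ) = 2 ^ 2 by norm_num, Real.sqrt_sq (by norm_num : (0:ℝ) ≤ 2)]
          ring
  · exfalso
    have hs : Real.sqrt (1 + x) ≤ 1 + x := by
      nlinarith [Real.sq_sqrt (by linarith : (0:ℝ) ≤ 1 + x),
        mul_self_nonneg (Real.sqrt (1 + x) - 1)]
    have h1 : x - 1 ≤ ε * (1 + x) := by
      have : x - 1 ≤ |x - 1| := le_abs_self _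
      nlinarith [Real.sqrt_nonneg (1 + x)]
    nlinarith

theorem stmt_15 (a c d : ℕ → ℝ) (θ α cst : ℝ)
    (hc : ∀ n, 0 < c n) (hd : ∀ n, 0 < d n) (hα : 0 < α) (hcst : 0 ≤ cst)
    (h1 : Tendsto (fun n => a n / c n) atTop (nhds θ))
    (h2 : ∃ N : ℕ, ∀ n, N ≤ n →
      |c n - d n| ≤ cst * (n : ℝ) ^ (-α) * Real.sqrt (d n * (c n + d n))) :
    Tendsto (fun n => c n / d n) atTop (nhds 1) ∧
    Tendsto (fun n => a n / d n) atTop (nhds θ) := by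
  obtain ⟨N, hN⟩ := h2
  -- ε_n := cst * n ^ (-α) tends to 0
  have hε0 : Tendsto (fun n : ℕ => cst * (n : ℝ) ^ (-α)) atTop (nhds 0) := by
    have : Tendsto (fun n : ℕ => (n : ℝ) ^ (-α)) atTop (nhds 0) :=
      (tendsto_rpow_neg_atTop hα).comp tendsto_natCast_atTop_atTop
    simpa using this.const_mul cst
  have h2ε : Tendsto (fun n : ℕ => 2 * (cst * (n : ℝ) ^ (-α))) atTop (nhds 0) := by
    simpa using hε0.const_mul 2
  -- eventually ε_n ≤ 1/2
  have hev : ∀ᶠ n : ℕ in atTop, cst * (n : ℝ) ^ (-α) ≤ 1/2 :=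
    hε0.eventually (eventually_le_nhds (by norm_num))
  -- eventual bound |c n / d n - 1| ≤ 2 ε_n
  have hbound : ∀ᶠ n : ℕ in atTop, |c n / d n - 1| ≤ 2 * (cst * (n : ℝ) ^ (-α)) := by
    filter_upwards [hev, eventually_ge_atTop N] with n hn hnN
    have hdn := hd n
    have hcn := hc n
    have hεnn : 0 ≤ cst * (n : ℝ) ^ (-α) :=
      mul_nonneg hcst (Real.rpow_nonneg (Nat.cast_nonneg n) _)
    apply key_quad _ _ (div_pos hcn hdn) hεnn hn
    have hdiv : |c n / d n - 1| = |c n - d n| / d n := by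
      rw [div_sub_one hdn.ne', abs_div, abs_of_pos hdn]
    rw [hdiv]
    have hsqrt : Real.sqrt (1 + c n / d n) = Real.sqrt (d n * (c n + d n)) / d n := by
      rw [show (1 : ℝ) + c n / d n = (d n * (c n + d n)) / (d n)^2 by field_simp; ring,
        Real.sqrt_div (by positivity), Real.sqrt_sq hdn.le]
    rw [hsqrt, mul_div_assoc' ]
    exact div_le_div_of_nonneg_right (hN n hnN) hdn.le |>.trans_eq (by ring_nf)
  have hcd : Tendsto (fun n => c n / d n) atTop (nhds 1) := by
    have h0 : Tendsto (fun n => c n / d n - 1) atTop (nhds 0) :=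
      squeeze_zero_norm' (by simpa [Real.norm_eq_abs] using hbound) h2ε
    simpa using h0.add_const 1
  refine ⟨hcd, ?_⟩
  have : (fun n => a n / d n) = fun n => (a n / c n) * (c n / d n) := by
    funext n
    rw [div_mul_div_comm, mul_comm (c n) (d n), mul_div_mul_right _ _ (hc n).ne']
  rw [this]
  simpa using h1.mul hcd
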